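/- arXiv:cs/0208028 — 2 statements merged into one kernel-verified Lean document; each statement's English description precedes it below -/
import Mathlib

section
/- Rule R3' (authorization name substitution) is sound: for all keys k1, k2, local name n, fully-qualified expressions p, q, Boolean D, action expression A, and intervals V1, V2: if (now ∈ V1 → Perm(k1, k2's n's p, A) ∧ (D → Del(k1, k2's n's p, A))) and (now ∈ V2 → k2's n ⊒ q) hold at time t under interpretation π = (L,P), then (now ∈ V1 ∩ V2 → Perm(k1, q's p, A) ∧ (D → Del(k1, q's p, A))) also holds at time t under π. -/
/-- Principal expressions over keys `K` and local names `N`. -/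
inductive PExp (K N : Type*) where
  | key : K → PExp K N
  | name : N → PExp K N
  | comp : PExp K N → PExp K N → PExp K N

/-- Extend a principal expression by a (possibly empty) string of local names
on the right; `PExp.ext r []` is `r`. -/
def PExp.ext {K N : Type*} (p : PExp K N) (l : List N) : PExp K N :=
  l.foldl (fun e n => PExp.comp e (PExp.name n)) p

/-- The interpretation of a principal expression. -/
def interp {K N : Type*} (L : K → N → ℕ → Set K) : PExp K N → K → ℕ → Set K
  | PExp.key k', _, _ => {k'}
  | PExp.name n, k, t => L k n t
  | PExp.comp p q, k, t => ⋃ k' ∈ interp L p k t, interp L q k' t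

/-- Fully-qualified principal expressions. -/
inductive FQ {K N : Type*} : PExp K N → Prop where
  | key (k : K) : FQ (PExp.key k)
  | ext {p : PExp K N} (n : N) : FQ p → FQ (PExp.comp p (PExp.name n))

/-- Permission/delegation assignment with the delegation-transitivity
condition. -/
def IsPDA {K Act : Type*} (P : K → ℕ → K → Act → ℕ) : Prop :=
  (∀ k1 t k2 a, P k1 t k2 a ≤ 2) ∧
  ∀ k1 k2 k3 t a, P k1 t k2 a = 2 → P k2 t k3 a ≤ P k1 t k3 a

/-- `Perm`: every key in `[[p]]` may perform every action in `A` (= σ(A)). -/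
def Perm {K N Act : Type*} (L : K → N → ℕ → Set K) (P : K → ℕ → K → Act → ℕ)
    (t : ℕ) (k1 : K) (p : PExp K N) (A : Set Act) : Prop :=
  ∀ k2 ∈ interp L p k1 t, ∀ a ∈ A, 1 ≤ P k1 t k2 a

/-- `Del`: every key in `[[p]]` may delegate every action in `A`. -/
def Del {K N Act : Type*} (L : K → N → ℕ → Set K) (P : K → ℕ → K → Act → ℕ)
    (t : ℕ) (k1 : K) (p : PExp K N) (A : Set Act) : Prop :=
  ∀ k2 ∈ interp L p k1 t, ∀ a ∈ A, P k1 t k2 a = 2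


lemma FQ.interp_const {K N : Type*} {L : K → N → ℕ → Set K} {q : PExp K N}
    (hq : FQ q) (k k' : K) (t : ℕ) : interp L q k t = interp L q k' t := by
  induction hq with
  | key => rfl
  | ext n h ih => rw [interp, interp, ih]

lemma ext_mono {K N : Type*} {L : K → N → ℕ → Set K} {a b : PExp K N}
    {k1 : K} {t : ℕ} (l : List N)
    (h : interp L a k1 t ⊆ interp L b k1 t) :
    interp L (a.ext l) k1 t ⊆ interp L (b.ext l) k1 t := by
  induction l generalizing a b with
  | nil => exact h
  | cons m l ih =>
    apply ih
    intro x hx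
    simp only [interp, Set.mem_iUnion] at hx ⊢
    obtain ⟨k', hk', hx⟩ := hx
    exact ⟨k', h hk', hx⟩

/-- Soundness of rule R3' (authorization name substitution). -/
theorem r3'_sound {K N Act : Type*}
    (L : K → N → ℕ → Set K) (P : K → ℕ → K → Act → ℕ) (hP : IsPDA P)
    (k1 k2 k : K) (n : N) (p : List N) (q : PExp K N) (hq : FQ q)
    (D : Bool) (A : Set Act) (V1 V2 : Set ℕ) (t : ℕ)
    (h1 : t ∈ V1 →
      Perm L P t k1 (PExp.ext (PExp.comp (PExp.key k2) (PExp.name n)) p) A ∧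
      (D = true →
        Del L P t k1 (PExp.ext (PExp.comp (PExp.key k2) (PExp.name n)) p) A))
    (h2 : t ∈ V2 →
      interp L q k t ⊆ interp L (PExp.comp (PExp.key k2) (PExp.name n)) k t) :
    t ∈ V1 ∩ V2 →
      Perm L P t k1 (PExp.ext q p) A ∧
      (D = true → Del L P t k1 (PExp.ext q p) A) := by
  rintro ⟨hV1, hV2⟩
  obtain ⟨hPerm, hDel⟩ := h1 hV1
  have hsub := h2 hV2
  have hsub1 : interp L q k1 t ⊆
      interp L (PExp.comp (PExp.key k2) (PExp.name n)) k1 t := by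
    rw [hq.interp_const k1 k]
    intro x hx
    have := hsub hx
    simpa [interp] using this
  have hext := ext_mono (L := L) (k1 := k1) (t := t) p hsub1
  exact ⟨fun x hx => hPerm x (hext hx),
    fun hD x hx => hDel hD x (hext hx)⟩
end

section
/- If π₁ = (L₁,P₁) and π₂ = (L₂,P₂) are both consistent with a run r, then so is their infimum π₀ = (L₀,P₀), where L₀(k,n,t) = L₁(k,n,t) ∩ L₂(k,n,t) and P₀(k,t,k',a) = min(P₁(k,t,k',a), P₂(k,t,k',a)). In particular the set of interpretations consistent with r is closed under binary infima. -/
/-- Naming and authorization certificates (action expressions recorded by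
their denotations). -/
inductive Cert (K N Act : Type*) where
  | naming : K → N → PExp K N → Set ℕ → Option K → Cert K N Act
  | auth : K → PExp K N → Bool → Set Act → Set ℕ → Option K → Cert K N Act

/-- Consistency of an interpretation `(L, P)` with a run `r`, relative to an
abstract applicability predicate `app`. -/
def Consistent {K N Act : Type*} (app : Cert K N Act → ℕ → Prop)
    (r : ℕ → Set (Cert K N Act))
    (L : K → N → ℕ → Set K) (P : K → ℕ → K → Act → ℕ) : Prop :=
  ∀ t t' : ℕ, t' ≤ t → ∀ c ∈ r t',
    (∀ k n p V R, c = Cert.naming k n p V R → t ∈ V → app c t →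
      interp L p k t ⊆ L k n t) ∧
    (∀ k p D A V R, c = Cert.auth k p D A V R → t ∈ V → app c t →
      ∀ a ∈ A, ∀ k' ∈ interp L p k t,
        1 ≤ P k t k' a ∧ (D = true → P k t k' a = 2))

lemma interp_mono {K N : Type*} {L L' : K → N → ℕ → Set K}
    (h : ∀ k n t, L k n t ⊆ L' k n t) :
    ∀ (p : PExp K N) (k : K) (t : ℕ), interp L p k t ⊆ interp L' p k t := by
  intro p
  induction p with
  | key k' => intro k t; exact subset_rfl
  | name n => intro k t; exact h k n t
  | comp p q ihp ihq =>
    intro k t x hx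
    simp only [interp, Set.mem_iUnion] at hx ⊢
    obtain ⟨k', hk', hx⟩ := hx
    exact ⟨k', ihp k t hk', ihq k' t hx⟩

/-- The binary infimum (pointwise intersection / pointwise minimum) of two
interpretations consistent with a run `r` is again an interpretation
consistent with `r`. -/
theorem consistent_inf {K N Act : Type*}
    (app : Cert K N Act → ℕ → Prop) (r : ℕ → Set (Cert K N Act))
    (L₁ L₂ : K → N → ℕ → Set K) (P₁ P₂ : K → ℕ → K → Act → ℕ)
    (hP₁ : IsPDA P₁) (hP₂ : IsPDA P₂)
    (h₁ : Consistent app r L₁ P₁) (h₂ : Consistent app r L₂ P₂) :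
    IsPDA (fun k t k' a => min (P₁ k t k' a) (P₂ k t k' a)) ∧
    Consistent app r (fun k n t => L₁ k n t ∩ L₂ k n t)
      (fun k t k' a => min (P₁ k t k' a) (P₂ k t k' a)) := by
  have hsub1 : ∀ k n t, L₁ k n t ∩ L₂ k n t ⊆ L₁ k n t := fun k n t =>
    Set.inter_subset_left
  have hsub2 : ∀ k n t, L₁ k n t ∩ L₂ k n t ⊆ L₂ k n t := fun k n t =>
    Set.inter_subset_right
  have hi1 := interp_mono (L' := L₁) hsub1
  have hi2 := interp_mono (L' := L₂) hsub2
  constructor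
  · constructor
    · intro k1 t k2 a
      exact le_trans (min_le_left _ _) (hP₁.1 k1 t k2 a)
    · intro k1 k2 k3 t a h
      have hm : 2 ≤ min (P₁ k1 t k2 a) (P₂ k1 t k2 a) := h.ge
      rw [le_min_iff] at hm
      have h1 : P₁ k1 t k2 a = 2 := by
        have := hP₁.1 k1 t k2 a
        omega
      have h2 : P₂ k1 t k2 a = 2 := by
        have := hP₂.1 k1 t k2 a
        omega
      have := hP₁.2 k1 k2 k3 t a h1
      have := hP₂.2 k1 k2 k3 t a h2
      simp only [le_min_iff, min_le_iff]
      omega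
  · intro t t' htt c hc
    obtain ⟨hn1, ha1⟩ := h₁ t t' htt c hc
    obtain ⟨hn2, ha2⟩ := h₂ t t' htt c hc
    constructor
    · intro k n p V R hcert hV happ x hx
      exact ⟨hn1 k n p V R hcert hV happ (hi1 p k t hx),
             hn2 k n p V R hcert hV happ (hi2 p k t hx)⟩
    · intro k p D A V R hcert hV happ a ha k' hk'
      obtain ⟨ha1', hD1⟩ := ha1 k p D A V R hcert hV happ a ha k' (hi1 p k t hk')
      obtain ⟨ha2', hD2⟩ := ha2 k p D A V R hcert hV happ a ha k' (hi2 p k t hk')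
      constructor
      · simp only [le_min_iff]; exact ⟨ha1', ha2'⟩
      · intro hD
        simp only [hD1 hD, hD2 hD, min_self]
end
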